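/- Let F be a probability measure on (0,∞) with m_r := ∫ (log(1+u))^r F(du) < ∞ for some r > 1. Then for every 0 < η ≤ 1, the function x ↦ ∫₀^∞ ((log(x+u))^{rη} − (log x)^{rη}) F(du) is bounded on [e^{r−1}, ∞). -/

import Mathlib

/-!
For `p ≤ r` the function `g x = (log x) ^ p` is concave on `[e^{r-1}, ∞)`: its derivative is
`p · exp ((p - 1) log log x - log x)`, and the exponent decreases once `log x ≥ p - 1`. Concavity
makes the increment `g (x + u) - g x` decreasing in `x`, so for `x ≥ x₀ := e^{r-1}` it is at most
`g (x₀ + u) ≤ (r - 1 + log (1 + u)) ^ p`, which is dominated by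
`1 + 2 ^ (r - 1) ((r - 1) ^ r + log (1 + u) ^ r)`, integrable by the log-moment assumption.
-/

open MeasureTheory Real Set

theorem ConcaveOn.antitoneOn_add_sub {𝕜 : Type*} [Field 𝕜] [LinearOrder 𝕜] [IsStrictOrderedRing 𝕜]
    {a u : 𝕜} {f : 𝕜 → 𝕜} (hf : ConcaveOn 𝕜 (Ici a) f) (hu : 0 ≤ u) :
    AntitoneOn (fun x => f (x + u) - f x) (Ici a) := by
  intro x hx y hy hxy
  have hyu : y + u ∈ Ici a := le_add_of_le_of_nonneg hy hu
  rcases (show 0 ≤ y + u - x by linarith).eq_or_lt with hd | hd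
  · obtain rfl : y = x := by linarith
    obtain rfl : u = 0 := by linarith
    rfl
  -- add the concavity inequalities at the two points `y` and `x + u` of `[x, y + u]`
  set w₁ := u / (y + u - x)
  set w₂ := (y - x) / (y + u - x)
  have hw : w₁ + w₂ = 1 := by simp only [w₁, w₂]; field_simp; ring
  have h₁ := hf.2 hx hyu (by positivity) (div_nonneg (sub_nonneg.2 hxy) hd.le) hw
  have h₂ := hf.2 hx hyu (div_nonneg (sub_nonneg.2 hxy) hd.le) (by positivity)
    ((add_comm w₂ w₁).trans hw)
  rw [show w₁ • x + w₂ • (y + u) = y by simp only [smul_eq_mul, w₁, w₂]; field_simp; ring] at h₁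
  rw [show w₂ • x + w₁ • (y + u) = x + u by simp only [smul_eq_mul, w₁, w₂]; field_simp; ring] at h₂
  simp only [smul_eq_mul] at h₁ h₂
  linear_combination h₁ + h₂ - (f x + f (y + u)) * hw

theorem log_rpow_div_self_antitoneOn {q a : ℝ} (ha : 1 < a) (hqa : q ≤ log a) :
    AntitoneOn (fun x => log x ^ q / x) (Ici a) := by
  have hexp : ∀ x, 1 < x → log x ^ q / x = exp (q * log (log x) - log x) := fun x hx => by
    rw [exp_sub, exp_log (by linarith), rpow_def_of_pos (log_pos hx), mul_comm]
  intro x hx y hy hxy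
  have hx₁ : 1 < x := ha.trans_le hx
  have hs : 0 < log x := log_pos hx₁
  have hst : log x ≤ log y := log_le_log (by linarith) hxy
  have hqs : q ≤ log x := hqa.trans (log_le_log (by linarith) hx)
  -- `log (t / s) ≤ t / s - 1` for `s = log x`, `t = log y`
  have hlog : log x * (log (log y) - log (log x)) ≤ log y - log x := by
    rw [← log_div (by linarith) hs.ne']
    calc log x * log (log y / log x) ≤ log x * (log y / log x - 1) :=
          mul_le_mul_of_nonneg_left (log_le_sub_one_of_pos (div_pos (hs.trans_le hst) hs)) hs.le
      _ = log y - log x := by field_simp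
  have hmono : 0 ≤ log (log y) - log (log x) := sub_nonneg.2 (log_le_log hs hst)
  simp only [hexp x hx₁, hexp y (hx₁.trans_le hxy), exp_le_exp]
  nlinarith [mul_nonneg (sub_nonneg.2 hqs) hmono]

theorem concaveOn_log_rpow {p a : ℝ} (hp : 0 ≤ p) (ha : 1 < a) (hpa : p - 1 ≤ log a) :
    ConcaveOn ℝ (Ici a) (fun x => log x ^ p) := by
  have hderiv : ∀ x, 1 < x → HasDerivAt (fun x => log x ^ p) (p * (log x ^ (p - 1) / x)) x :=
    fun x hx => ((hasDerivAt_log (by linarith)).rpow_const (Or.inl (log_pos hx).ne')).congr_deriv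
      (by ring)
  refine AntitoneOn.concaveOn_of_deriv (convex_Ici a)
    (fun x hx => (hderiv x (ha.trans_le hx)).continuousAt.continuousWithinAt) ?_ ?_ <;>
    rw [interior_Ici]
  · exact fun x hx => (hderiv x (ha.trans hx)).differentiableAt.differentiableWithinAt
  · intro x hx y hy hxy
    rw [(hderiv x (ha.trans hx)).deriv, (hderiv y (ha.trans hy)).deriv]
    exact mul_le_mul_of_nonneg_left (log_rpow_div_self_antitoneOn ha hpa (Ioi_subset_Ici_self hx)
      (Ioi_subset_Ici_self hy) hxy) hp

theorem log_add_le_log_add_log_one_add {x u : ℝ} (hx : 1 ≤ x) (hu : 0 ≤ u) :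
    log (x + u) ≤ log x + log (1 + u) := by
  rw [← log_mul (by linarith) (by linarith)]
  exact log_le_log (by linarith) (by nlinarith)

theorem rpow_le_one_add_rpow {s p q : ℝ} (hs : 0 ≤ s) (hp : 0 ≤ p) (hpq : p ≤ q) :
    s ^ p ≤ 1 + s ^ q := by
  rcases le_total s 1 with hs₁ | hs₁
  · linarith [rpow_le_one hs hs₁ hp, rpow_nonneg hs q]
  · linarith [rpow_le_rpow_of_exponent_le hs₁ hpq]

theorem Real.rpow_add_le_mul_rpow_add_rpow {a b p : ℝ} (ha : 0 ≤ a) (hb : 0 ≤ b) (hp : 1 ≤ p) :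
    (a + b) ^ p ≤ 2 ^ (p - 1) * (a ^ p + b ^ p) := by
  lift a to NNReal using ha
  lift b to NNReal using hb
  exact_mod_cast NNReal.rpow_add_le_mul_rpow_add_rpow a b hp

theorem log_rpow_add_sub_le {r p x u : ℝ} (hr : 1 < r) (hp : 0 ≤ p) (hpr : p ≤ r)
    (hx : exp (r - 1) ≤ x) (hu : 0 ≤ u) :
    log (x + u) ^ p - log x ^ p ≤ 1 + 2 ^ (r - 1) * ((r - 1) ^ r + log (1 + u) ^ r) := by
  set x₀ := exp (r - 1)
  have hx₀ : 1 < x₀ := one_lt_exp_iff.2 (by linarith)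
  have hlogx₀ : log x₀ = r - 1 := log_exp _
  have hconc : ConcaveOn ℝ (Ici x₀) (fun x => log x ^ p) :=
    concaveOn_log_rpow hp hx₀ (by linarith)
  have hlog : log (x₀ + u) ≤ r - 1 + log (1 + u) :=
    hlogx₀ ▸ log_add_le_log_add_log_one_add hx₀.le hu
  have hlog₁ : 0 ≤ log (1 + u) := log_nonneg (by linarith)
  calc log (x + u) ^ p - log x ^ p ≤ log (x₀ + u) ^ p - log x₀ ^ p :=
        hconc.antitoneOn_add_sub hu self_mem_Ici hx hx
    _ ≤ log (x₀ + u) ^ p := sub_le_self _ (rpow_nonneg (log_nonneg hx₀.le) _)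
    _ ≤ (r - 1 + log (1 + u)) ^ p := rpow_le_rpow (log_nonneg (by linarith)) hlog hp
    _ ≤ 1 + (r - 1 + log (1 + u)) ^ r := rpow_le_one_add_rpow (by linarith) hp hpr
    _ ≤ 1 + 2 ^ (r - 1) * ((r - 1) ^ r + log (1 + u) ^ r) := by
        gcongr
        exact rpow_add_le_mul_rpow_add_rpow (by linarith) hlog₁ hr.le

/-- If `F` is a probability measure on `(0,∞)` with finite log-moment
`m_r = ∫ (log(1+u))^r F(du) < ∞` for some `r > 1`, then for each `0 < η ≤ 1` the
function `x ↦ ∫ ((log(x+u))^{rη} − (log x)^{rη}) F(du)` is bounded on `[e^{r−1}, ∞)`. -/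
theorem stmt_14 (F : Measure ℝ) [IsProbabilityMeasure F]
    (hsupp : F (Set.Iic 0) = 0)
    (r : ℝ) (hr : 1 < r)
    (hmom : Integrable (fun u => (Real.log (1 + u)) ^ r) F) :
    ∀ η : ℝ, 0 < η → η ≤ 1 →
      ∃ C : ℝ, ∀ x : ℝ, Real.exp (r - 1) ≤ x →
        (∫ u, ((Real.log (x + u)) ^ (r * η) - (Real.log x) ^ (r * η)) ∂F) ≤ C := by
  intro η hη hη₁
  have hpos : ∀ᵐ u ∂F, 0 < u := by
    filter_upwards [measure_eq_zero_iff_ae_notMem.1 hsupp] with u hu using not_le.1 hu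
  refine ⟨∫ u, 1 + 2 ^ (r - 1) * ((r - 1) ^ r + log (1 + u) ^ r) ∂F, fun x hx =>
    integral_mono_of_nonneg ?_ ?_ ?_⟩
  · have hx₁ : 1 ≤ x := (one_le_exp (by linarith)).trans hx
    filter_upwards [hpos] with u hu
    exact sub_nonneg.2 (rpow_le_rpow (log_nonneg hx₁)
      (log_le_log (by linarith) (by linarith)) (by positivity))
  · exact (integrable_const 1).add (((integrable_const _).add hmom).const_mul _)
  · filter_upwards [hpos] with u hu
    exact log_rpow_add_sub_le hr (by positivity) (mul_le_of_le_one_right (by linarith) hη₁) hx hu.le
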